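/- For every element w of a Coxeter group W with Coxeter system (W,S), the set In(w) := {s ∈ S : ℓ(ws) < ℓ(w)} is a spherical subset of S; that is, the standard parabolic subgroup of W generated by In(w) is finite. -/

import Mathlib

/-!
Let `I` be the set of right descents of `w`. By the lifting property of the Bruhat order
(if `s` is a right descent of `w` and `v ≤ w`, then `v s ≤ w`), the whole parabolic subgroup
`W_I` lies in the Bruhat interval `[1, w]`. By the subword property, every element of this
interval is the product of a subword of a fixed reduced word for `w`, and there are only
finitely many such subwords.

The lifting property and the subword property are proved together by induction on `ℓ w`,
starting from the strong exchange condition. The latter comes from Tits' action of `W` on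
`W × ZMod 2`, which shows that the parity of the number of occurrences of a reflection in the
right inversion sequence of a word depends only on the element the word represents.
-/

namespace CoxeterSystem

open List

variable {B W : Type*} [Group W] {M : CoxeterMatrix B} (cs : CoxeterSystem M W)

local prefix:100 "s" => cs.simple
local prefix:100 "π" => cs.wordProd
local prefix:100 "ℓ" => cs.length
local prefix:100 "ris" => cs.rightInvSeq
local prefix:100 "lis" => cs.leftInvSeq

theorem alternatingWord_two_mul_succ (i j : B) (p : ℕ) :
    alternatingWord i j (2 * (p + 1)) = i :: j :: alternatingWord i j (2 * p) := by
  rw [show 2 * (p + 1) = 2 * p + 1 + 1 by ring, alternatingWord_succ', alternatingWord_succ']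
  simp

theorem reverse_alternatingWord_two_mul (i j : B) (p : ℕ) :
    (alternatingWord i j (2 * p)).reverse = alternatingWord j i (2 * p) := by
  induction p generalizing i j with
  | zero => rfl
  | succ p ih =>
    have h : alternatingWord i j (2 * (p + 1)) = alternatingWord i j (2 * p) ++ [i, j] := by
      rw [show 2 * (p + 1) = 2 * p + 1 + 1 by ring, alternatingWord_succ, alternatingWord_succ]
      simp
    rw [h, reverse_append, ih, alternatingWord_two_mul_succ]
    rfl

theorem leftInvSeq_alternatingWord_two_mul (i j : B) (p : ℕ) :
    lis (alternatingWord i j (2 * p)) = (range (2 * p)).map fun k => s i * (s j * s i) ^ k := by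
  refine ext_getElem (by simp) fun k hk _ => ?_
  rw [getElem_leftInvSeq_alternatingWord cs i j p k (by simpa using hk),
    prod_alternatingWord_eq_mul_pow]
  simp [show (2 * k + 1) / 2 = k by omega]

section Tits

variable [DecidableEq W]

def titsSimple (i : B) : Function.End (W × ZMod 2) :=
  fun p => (s i * p.1 * s i, p.2 + if p.1 = s i then 1 else 0)

theorem prod_map_titsSimple_apply (ω : List B) (t : W) (e : ZMod 2) :
    (ω.map cs.titsSimple).prod (t, e) = (π ω * t * (π ω)⁻¹, e + (ris ω).count t) := by
  induction ω with
  | nil => simp; rfl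
  | cons i ω ih =>
    change cs.titsSimple i ((ω.map cs.titsSimple).prod (t, e)) = _
    have hconj : π ω * (t * (π ω)⁻¹) = s i ↔ (π ω)⁻¹ * (s i * π ω) = t := by
      constructor <;> rintro h <;> rw [← h] <;> group
    simp only [ih, titsSimple, rightInvSeq, count_cons, wordProd_cons, mul_inv_rev,
      cs.inv_simple, mul_assoc, beq_iff_eq, hconj]
    split_ifs <;> simp [add_assoc]

theorem even_count_rightInvSeq_alternatingWord (i j : B) (t : W) :
    Even ((ris (alternatingWord i j (2 * M i j))).count t) := by
  rw [← reverse_alternatingWord_two_mul, rightInvSeq_reverse, count_reverse,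
    leftInvSeq_alternatingWord_two_mul, two_mul, range_add, map_append, map_map, count_append]
  have hperiodic : (fun k => s j * (s i * s j) ^ k) ∘ (M i j + ·) =
      fun k => s j * (s i * s j) ^ k := by
    funext k
    simp [pow_add, cs.simple_mul_simple_pow]
  rw [hperiodic]
  exact ⟨_, rfl⟩

theorem titsSimple_mul_pow (i j : B) (r : ℕ) :
    (cs.titsSimple i * cs.titsSimple j) ^ r =
      ((alternatingWord i j (2 * r)).map cs.titsSimple).prod := by
  induction r with
  | zero => rfl
  | succ r ih => simp [pow_succ', ih, alternatingWord_two_mul_succ, mul_assoc]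

theorem isLiftable_titsSimple : M.IsLiftable cs.titsSimple := by
  intro i j
  funext ⟨t, e⟩
  rw [titsSimple_mul_pow, prod_map_titsSimple_apply, prod_alternatingWord_eq_mul_pow]
  simp [cs.simple_mul_simple_pow,
    (cs.even_count_rightInvSeq_alternatingWord i j t).natCast_zmod_two]
  rfl

def titsRep : W →* Function.End (W × ZMod 2) :=
  cs.lift ⟨cs.titsSimple, cs.isLiftable_titsSimple⟩

theorem titsRep_wordProd_apply (ω : List B) (t : W) (e : ZMod 2) :
    cs.titsRep (π ω) (t, e) = (π ω * t * (π ω)⁻¹, e + (ris ω).count t) := by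
  rw [← prod_map_titsSimple_apply, wordProd, map_list_prod, map_map,
    show ⇑cs.titsRep ∘ cs.simple = cs.titsSimple from funext (cs.lift_apply_simple _)]

def rightInvParity (w t : W) : ZMod 2 := (cs.titsRep w (t, 0)).2

theorem rightInvParity_wordProd (ω : List B) (t : W) :
    cs.rightInvParity (π ω) t = (ris ω).count t := by
  simp [rightInvParity, titsRep_wordProd_apply]

theorem titsRep_apply (w t : W) (e : ZMod 2) :
    cs.titsRep w (t, e) = (w * t * w⁻¹, e + cs.rightInvParity w t) := by
  obtain ⟨ω, rfl⟩ := cs.wordProd_surjective w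
  rw [titsRep_wordProd_apply, rightInvParity_wordProd]

theorem rightInvParity_mul (x y t : W) :
    cs.rightInvParity (x * y) t = cs.rightInvParity y t + cs.rightInvParity x (y * t * y⁻¹) := by
  rw [rightInvParity, map_mul]
  change (cs.titsRep x (cs.titsRep y (t, 0))).2 = _
  rw [titsRep_apply, titsRep_apply, zero_add]

theorem rightInvParity_self {t : W} (ht : cs.IsReflection t) : cs.rightInvParity t t = 1 := by
  obtain ⟨v, i, rfl⟩ := ht
  have hv : cs.rightInvParity v⁻¹ (v * s i * v⁻¹) + cs.rightInvParity v (s i) = 0 := by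
    have h := cs.rightInvParity_mul v v⁻¹ (v * s i * v⁻¹)
    rw [mul_inv_cancel, show v⁻¹ * (v * s i * v⁻¹) * v⁻¹⁻¹ = s i by group] at h
    rw [← h]
    simpa using cs.rightInvParity_wordProd [] _
  have hs : cs.rightInvParity (s i) (s i) = 1 := by
    simpa using cs.rightInvParity_wordProd [i] (s i)
  rw [rightInvParity_mul, rightInvParity_mul,
    show v⁻¹ * (v * s i * v⁻¹) * v⁻¹⁻¹ = s i by group,
    show s i * s i * (s i)⁻¹ = s i by group, hs]
  linear_combination hv

theorem isRightInversion_of_rightInvParity_ne_zero {w t : W} (h : cs.rightInvParity w t ≠ 0) :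
    cs.IsRightInversion w t := by
  obtain ⟨ω, hω, rfl⟩ := cs.exists_isReduced w
  rw [rightInvParity_wordProd] at h
  refine cs.isRightInversion_of_mem_rightInvSeq hω (count_pos_iff.mp (Nat.pos_of_ne_zero ?_))
  rintro h0
  simp [h0] at h

theorem rightInvParity_eq_one_of_isRightInversion {w t : W} (h : cs.IsRightInversion w t) :
    cs.rightInvParity w t = 1 := by
  have hwt : cs.rightInvParity (w * t) t = 0 := by
    by_contra hne
    have hlt := (cs.isRightInversion_of_rightInvParity_ne_zero hne).2
    rw [mul_assoc, h.1.mul_self, mul_one] at hlt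
    exact lt_asymm h.2 hlt
  have hw : w = w * t * t := by rw [mul_assoc, h.1.mul_self, mul_one]
  rw [hw, rightInvParity_mul, mul_inv_cancel_right, cs.rightInvParity_self h.1, hwt, add_zero]

end Tits

theorem mem_rightInvSeq_of_isRightInversion {ω : List B} {t : W}
    (h : cs.IsRightInversion (π ω) t) : t ∈ ris ω := by
  classical
  have hodd := cs.rightInvParity_eq_one_of_isRightInversion h
  rw [rightInvParity_wordProd] at hodd
  exact count_pos_iff.mp (Nat.pos_of_ne_zero fun h0 => by simp [h0] at hodd)

theorem exists_eraseIdx_of_isRightInversion {ω : List B} {t : W}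
    (h : cs.IsRightInversion (π ω) t) : ∃ k, π ω * t = π (ω.eraseIdx k) := by
  obtain ⟨k, hk, rfl⟩ := mem_iff_getElem.mp (cs.mem_rightInvSeq_of_isRightInversion h)
  exact ⟨k, by rw [← getD_eq_getElem _ 1 hk, wordProd_mul_getD_rightInvSeq]⟩

theorem isReduced_append_singleton_iff {ρ : List B} {i : B} :
    cs.IsReduced (ρ ++ [i]) ↔ cs.IsReduced ρ ∧ ¬cs.IsRightDescent (π ρ) i := by
  have := cs.length_wordProd_le ρ
  have := cs.length_mul_simple (π ρ) i
  simp only [IsReduced, wordProd_append, wordProd_singleton, length_append, length_singleton,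
    not_isRightDescent_iff]
  omega

def BruhatStep (w v : W) : Prop := ∃ t, cs.IsRightInversion w t ∧ w * t = v

def BruhatLE (v w : W) : Prop := Relation.ReflTransGen cs.BruhatStep w v

theorem BruhatLE.refl (w : W) : cs.BruhatLE w w := Relation.ReflTransGen.refl

theorem bruhatLE_mul_of_isRightInversion {w t : W} (h : cs.IsRightInversion w t) :
    cs.BruhatLE (w * t) w :=
  Relation.ReflTransGen.single ⟨t, h, rfl⟩

theorem bruhatLE_mul_simple_self {w : W} {i : B} (h : cs.IsRightDescent w i) :
    cs.BruhatLE (w * s i) w :=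
  cs.bruhatLE_mul_of_isRightInversion ⟨cs.isReflection_simple i, h⟩

theorem bruhatLE_mul_simple {w : W} {i : B} (h : ¬cs.IsRightDescent w i) :
    cs.BruhatLE w (w * s i) := by
  have hdesc : cs.IsRightDescent (w * s i) i := by
    rwa [isRightDescent_iff_not_isRightDescent_mul, simple_mul_simple_cancel_right]
  simpa only [simple_mul_simple_cancel_right] using cs.bruhatLE_mul_simple_self hdesc

namespace BruhatLE

variable {cs}

theorem trans {u v w : W} (huv : cs.BruhatLE u v) (hvw : cs.BruhatLE v w) : cs.BruhatLE u w :=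
  Relation.ReflTransGen.trans hvw huv

theorem exists_sublist {v w : W} (h : cs.BruhatLE v w) {ω : List B} (hω : π ω = w) :
    ∃ τ, τ <+ ω ∧ π τ = v := by
  induction h using Relation.ReflTransGen.head_induction_on generalizing ω with
  | refl => exact ⟨ω, Sublist.refl ω, hω⟩
  | head hstep _ ih =>
    obtain ⟨t, ht, rfl⟩ := hstep
    subst hω
    obtain ⟨k, hk⟩ := cs.exists_eraseIdx_of_isRightInversion ht
    obtain ⟨τ, hτ, rfl⟩ := ih hk.symm
    exact ⟨τ, hτ.trans (eraseIdx_sublist ω k), rfl⟩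

end BruhatLE

def HasLiftingProperty (w : W) : Prop :=
  ∀ v i, cs.BruhatLE v w → cs.IsRightDescent w i → cs.BruhatLE (v * s i) w

theorem bruhatLE_mul_simple_mul_simple {a b : W} {i : B}
    (hlift : ∀ u, ℓ u < ℓ b → cs.HasLiftingProperty u) (hab : cs.BruhatLE a b)
    (hb : ¬cs.IsRightDescent b i) : cs.BruhatLE (a * s i) (b * s i) := by
  induction hab using Relation.ReflTransGen.head_induction_on with
  | refl => exact BruhatLE.refl cs _
  | @head c _ hstep hua ih =>
    obtain ⟨t, ht, rfl⟩ := hstep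
    by_cases hu : cs.IsRightDescent (c * t) i
    · exact ((hlift _ ht.2) a i hua hu).trans
        ((cs.bruhatLE_mul_of_isRightInversion ht).trans (cs.bruhatLE_mul_simple hb))
    · have hconj : cs.IsRightInversion (c * s i) (s i * t * s i) := by
        refine ⟨by simpa only [inv_simple] using ht.1.conj (s i), ?_⟩
        have := ht.2
        rw [not_isRightDescent_iff] at hb hu
        simp only [← mul_assoc, simple_mul_simple_cancel_right]
        omega
      have hstep := cs.bruhatLE_mul_of_isRightInversion hconj
      simp only [← mul_assoc, simple_mul_simple_cancel_right] at hstep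
      exact (ih (fun u hu' => hlift u (hu'.trans ht.2)) hu).trans hstep

theorem bruhatLE_wordProd_of_sublist {ρ τ : List B} (hρ : cs.IsReduced ρ) (hτ : τ <+ ρ)
    (hlift : ∀ u, ℓ u < ℓ (π ρ) → cs.HasLiftingProperty u) :
    cs.BruhatLE (π τ) (π ρ) := by
  induction ρ using List.reverseRecOn generalizing τ with
  | nil => rw [sublist_nil.mp hτ]; exact BruhatLE.refl cs _
  | append_singleton ρ j ih =>
    obtain ⟨hρ, hj⟩ := cs.isReduced_append_singleton_iff.mp hρ
    have hlt : ℓ (π ρ) < ℓ (π ρ * s j) := by rw [cs.not_isRightDescent_iff.mp hj]; omega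
    have hlift' (u : W) (hu : ℓ u < ℓ (π ρ)) :=
      hlift u (by simpa [wordProd_append] using hu.trans hlt)
    have hρj : cs.BruhatLE (π ρ) (π ρ * s j) := cs.bruhatLE_mul_simple hj
    obtain ⟨τ₁, τ₂, rfl, h₁, h₂⟩ := sublist_append_iff.mp hτ
    have hτ₁ := ih hρ h₁ hlift'
    rcases sublist_singleton.mp h₂ with rfl | rfl
    · simpa [wordProd_append] using hτ₁.trans hρj
    · simp only [wordProd_append, wordProd_singleton]
      by_cases hτj : cs.IsRightDescent (π τ₁) j
      · exact (cs.bruhatLE_mul_simple_self hτj).trans (hτ₁.trans hρj)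
      · exact cs.bruhatLE_mul_simple_mul_simple hlift' hτ₁ hj

theorem hasLiftingProperty_of_forall_length_lt {w : W}
    (hlift : ∀ u, ℓ u < ℓ w → cs.HasLiftingProperty u) : cs.HasLiftingProperty w := by
  intro v i hvw hi
  obtain ⟨ρ, hρ, hρw⟩ := cs.exists_isReduced (w * s i)
  have hw : π (ρ ++ [i]) = w := by
    rw [wordProd_append, ← hρw, wordProd_singleton, simple_mul_simple_cancel_right]
  have hred : cs.IsReduced (ρ ++ [i]) := by
    refine cs.isReduced_append_singleton_iff.mpr ⟨hρ, ?_⟩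
    rwa [← hρw, ← isRightDescent_iff_not_isRightDescent_mul]
  obtain ⟨τ, hτ, rfl⟩ := hvw.exists_sublist hw
  obtain ⟨τ₁, τ₂, rfl, h₁, h₂⟩ := sublist_append_iff.mp hτ
  rcases sublist_singleton.mp h₂ with rfl | rfl
  · rw [append_nil, ← wordProd_singleton, ← wordProd_append, ← hw]
    exact cs.bruhatLE_wordProd_of_sublist hred (h₁.append_right [i]) (hw ▸ hlift)
  · rw [wordProd_append, wordProd_singleton, simple_mul_simple_cancel_right]
    have hlt : ℓ (π ρ) < ℓ w := hρw ▸ hi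
    exact (cs.bruhatLE_wordProd_of_sublist hρ h₁ fun u hu => hlift u (hu.trans hlt)).trans
      (hρw ▸ cs.bruhatLE_mul_simple_self hi)

theorem hasLiftingProperty (w : W) : cs.HasLiftingProperty w := by
  induction h : ℓ w using Nat.strong_induction_on generalizing w with
  | _ n ih => exact cs.hasLiftingProperty_of_forall_length_lt fun u hu => ih _ (h ▸ hu) u rfl

theorem exists_sublist_wordProd_eq_mul_simple {ρ τ : List B} (hρ : cs.IsReduced ρ)
    (hτ : τ <+ ρ) {i : B} (hi : cs.IsRightDescent (π ρ) i) :
    ∃ τ', τ' <+ ρ ∧ π τ' = π τ * s i :=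
  (cs.hasLiftingProperty _ _ i
    (cs.bruhatLE_wordProd_of_sublist hρ hτ fun u _ => cs.hasLiftingProperty u) hi
    ).exists_sublist rfl

end CoxeterSystem

/-- **`In(w)` is spherical.**
For every element `w` of a Coxeter group `W` with Coxeter system `(W, S)`, the set
`In(w) = {s ∈ S : ℓ(ws) < ℓ(w)}` is a spherical subset of `S`; that is, the standard
parabolic subgroup of `W` generated by `In(w)` is finite. -/
theorem in_w_spherical {B : Type*} {W : Type*} [Group W] {M : CoxeterMatrix B}
    (cs : CoxeterSystem M W) (w : W) :
    ((Subgroup.closure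
        (cs.simple '' {i : B | cs.length (w * cs.simple i) < cs.length w}) :
      Subgroup W) : Set W).Finite := by
  obtain ⟨ρ, hρ, rfl⟩ := cs.exists_isReduced w
  refine (ρ.sublists.map cs.wordProd).finite_toSet.subset fun v hv => ?_
  simp only [SetLike.mem_coe] at hv
  simp only [Set.mem_ofPred_eq, List.mem_map, List.mem_sublists]
  induction hv using Subgroup.closure_induction_right with
  | one => exact ⟨[], List.nil_sublist ρ, cs.wordProd_nil⟩
  | mul_right v _ x hx ih =>
    obtain ⟨i, hi, rfl⟩ := hx
    obtain ⟨τ, hτ, rfl⟩ := ih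
    exact cs.exists_sublist_wordProd_eq_mul_simple hρ hτ hi
  | mul_inv_cancel v _ x hx ih =>
    obtain ⟨i, hi, rfl⟩ := hx
    obtain ⟨τ, hτ, rfl⟩ := ih
    rw [cs.inv_simple]
    exact cs.exists_sublist_wordProd_eq_mul_simple hρ hτ hi
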